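/- arXiv:1809.10946 — 2 statements merged into one kernel-verified Lean document; each statement's English description precedes it below -/
import Mathlib

section
/- Let K ⊆ L• be a knowledge base each of whose members is in normal form. Then R*_K is a ranked model of K, i.e., R*_K ⊨ α for every α ∈ K. -/
attribute [local instance] Classical.propDecidable

universe u

/-- Sentences of Propositional Typicality Logic over atoms `P`. -/
inductive PTL (P : Type u) : Type u
  | atom : P → PTL P
  | neg  : PTL P → PTL P
  | conj : PTL P → PTL P → PTL P
  | top  : PTL P
  | bot  : PTL P
  | typ  : PTL P → PTL P

namespace PTL

/-- Material implication, defined from `¬` and `∧`. -/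
def impl {P : Type u} (a b : PTL P) : PTL P := neg (conj a (neg b))

/-- Disjunction, defined from `¬` and `∧`. -/
def disj {P : Type u} (a b : PTL P) : PTL P := neg (conj (neg a) (neg b))

/-- Purely propositional sentences: no occurrence of the typicality operator. -/
def IsProp {P : Type u} : PTL P → Prop
  | atom _ => True
  | neg a => IsProp a
  | conj a b => IsProp a ∧ IsProp b
  | top => True
  | bot => True
  | typ _ => False

end PTL

/-- Propositional valuations. -/
abbrev Val (P : Type u) := P → Bool

/-- Satisfaction of a PTL sentence by a valuation, relative to a ranking
function `rho : Val P → ℕ∞`. -/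
def satR {P : Type u} (rho : Val P → ℕ∞) : Val P → PTL P → Prop
  | v, PTL.atom p => v p = true
  | v, PTL.neg a => ¬ satR rho v a
  | v, PTL.conj a b => satR rho v a ∧ satR rho v b
  | _, PTL.top => True
  | _, PTL.bot => False
  | v, PTL.typ a => satR rho v a ∧ ∀ v', rho v' < rho v → ¬ satR rho v' a

/-- The convexity property of ranking functions. -/
def RkConvex {P : Type u} (rho : Val P → ℕ∞) : Prop :=
  ∀ (v : Val P) (i : ℕ), rho v = (i : ℕ∞) → ∀ j : ℕ, j < i → ∃ v', rho v' = (j : ℕ∞)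

/-- A ranked interpretation: a convex ranking function on valuations. -/
structure RankedInterp (P : Type u) where
  rk : Val P → ℕ∞
  convex : RkConvex rk

/-- `rho` is a ranked model of `a`: every possible valuation satisfies `a`. -/
def modelsR {P : Type u} (rho : Val P → ℕ∞) (a : PTL P) : Prop :=
  ∀ v, rho v < ⊤ → satR rho v a

/-- `R ⊨ a`. -/
def RankedInterp.models {P : Type u} (R : RankedInterp P) (a : PTL P) : Prop :=
  modelsR R.rk a

/-- `R` is a ranked model of the knowledge base `K`. -/
def modelsSet {P : Type u} (R : RankedInterp P) (K : Set (PTL P)) : Prop :=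
  ∀ a ∈ K, R.models a

/-- Ranked entailment consequences of `K`. -/
def Cn0 {P : Type u} (K : Set (PTL P)) : Set (PTL P) :=
  {a | ∀ R : RankedInterp P, modelsSet R K → R.models a}

/-- Conjunction of a list of sentences (empty conjunction is `⊤`). -/
def bigConj {P : Type u} : List (PTL P) → PTL P
  | [] => PTL.top
  | a :: l => PTL.conj a (bigConj l)

/-- Disjunction of a list of sentences (empty disjunction is `⊥`). -/
def bigDisj {P : Type u} : List (PTL P) → PTL P
  | [] => PTL.bot
  | a :: l => PTL.disj a (bigDisj l)

/-- `a` is in normal form: `⋀_{i≤t} •θᵢ → (φ ∨ ⋁_{i≤s} •ψᵢ)` with all the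
`θᵢ`, `φ`, `ψᵢ` purely propositional. -/
def InNormalForm {P : Type u} (a : PTL P) : Prop :=
  ∃ (ths : List (PTL P)) (phi : PTL P) (pss : List (PTL P)),
    (∀ t ∈ ths, t.IsProp) ∧ phi.IsProp ∧ (∀ s ∈ pss, s.IsProp) ∧
    a = PTL.impl (bigConj (ths.map PTL.typ)) (PTL.disj phi (bigDisj (pss.map PTL.typ)))

/-- `R^1_S`: increase by one the rank of every valuation not in `S`. -/
noncomputable def bump {P : Type u} (rho : Val P → ℕ∞) (S : Set (Val P)) : Val P → ℕ∞ :=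
  fun v => if v ∈ S then rho v else rho v + 1

/-- `R^∞_S`: make every valuation not in `S` impossible. -/
noncomputable def toInf {P : Type u} (rho : Val P → ℕ∞) (S : Set (Val P)) : Val P → ℕ∞ :=
  fun v => if v ∈ S then rho v else ⊤

/-- `⟦K⟧_rho`: the possible valuations satisfying every member of `K`. -/
def KExt {P : Type u} (K : Set (PTL P)) (rho : Val P → ℕ∞) : Set (Val P) :=
  {v | rho v < ⊤ ∧ ∀ a ∈ K, satR rho v a}

/-- The sequence `R_i` of the LM-minimal construction. -/
noncomputable def Rseq {P : Type u} (K : Set (PTL P)) : ℕ → Val P → ℕ∞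
  | 0 => fun _ => 0
  | i + 1 => bump (Rseq K i) (KExt K (Rseq K i))

/-- The sequence `S_i` of the LM-minimal construction:
`S_0 = ∅`, `S_{i+1} = ⟦K⟧_{R_i}`. -/
noncomputable def Sseq {P : Type u} (K : Set (PTL P)) : ℕ → Set (Val P)
  | 0 => ∅
  | i + 1 => KExt K (Rseq K i)

/-- The least `i ≥ 1` with `S_i = S_{i-1}`. -/
noncomputable def stopIdx {P : Type u} (K : Set (PTL P)) : ℕ :=
  sInf {i : ℕ | 1 ≤ i ∧ Sseq K i = Sseq K (i - 1)}

/-- The LM-minimal ranked interpretation `R*_K := (R_{i-1})^∞_{S_i}`. -/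
noncomputable def Rstar {P : Type u} (K : Set (PTL P)) : Val P → ℕ∞ :=
  toInf (Rseq K (stopIdx K - 1)) (Sseq K (stopIdx K))

/-!
Satisfaction of a normal-form sentence at `v` only depends on which valuations lie strictly
below `v`. At stage `i` of the construction every valuation outside `S_{i+1} = ⟦K⟧_{R_i}` has the
top rank `i`, so `S_{i+1}` is closed downwards in `R_i`; hence neither `R_i^1_{S_{i+1}}` nor
`R_i^∞_{S_{i+1}}` changes what lies below a member of `S_{i+1}`. The first gives the monotonicity
`S_{i+1} ⊆ S_{i+2}` that keeps the invariant going, the second that `R_i^∞_{S_{i+1}} ⊨ K` at every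
stage `i`, in particular at the one defining `R*_K`.
-/

section Satisfaction

variable {P : Type u} {ρ ρ' : Val P → ℕ∞} {v : Val P}

lemma satR_impl {a b : PTL P} : satR ρ v (a.impl b) ↔ (satR ρ v a → satR ρ v b) := by
  simp only [PTL.impl, satR]; tauto

lemma satR_disj {a b : PTL P} : satR ρ v (a.disj b) ↔ (satR ρ v a ∨ satR ρ v b) := by
  simp only [PTL.disj, satR]; tauto

lemma satR_bigConj (l : List (PTL P)) : satR ρ v (bigConj l) ↔ ∀ a ∈ l, satR ρ v a := by
  induction l with
  | nil => simp [bigConj, satR]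
  | cons a l ih => simp [bigConj, satR, ih]

lemma satR_bigDisj (l : List (PTL P)) : satR ρ v (bigDisj l) ↔ ∃ a ∈ l, satR ρ v a := by
  induction l with
  | nil => simp [bigDisj, satR]
  | cons a l ih => simp [bigDisj, satR_disj, ih]

lemma satR_congr_of_isProp {a : PTL P} (ha : a.IsProp) : satR ρ v a ↔ satR ρ' v a := by
  induction a with
  | atom p => rfl
  | neg a ih => exact not_congr (ih ha)
  | conj a b iha ihb => exact and_congr (iha ha.1) (ihb ha.2)
  | top => rfl
  | bot => rfl
  | typ a _ => exact ha.elim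

lemma satR_typ_congr (hlt : ∀ u, ρ u < ρ v ↔ ρ' u < ρ' v) {θ : PTL P} (hθ : θ.IsProp) :
    satR ρ v θ.typ ↔ satR ρ' v θ.typ :=
  and_congr (satR_congr_of_isProp hθ)
    (forall_congr' fun u => imp_congr (hlt u) (not_congr (satR_congr_of_isProp hθ)))

lemma satR_congr_of_inNormalForm (hlt : ∀ u, ρ u < ρ v ↔ ρ' u < ρ' v) {a : PTL P}
    (ha : InNormalForm a) :
    satR ρ v a ↔ satR ρ' v a := by
  obtain ⟨ths, phi, pss, hths, hphi, hpss, rfl⟩ := ha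
  simp only [satR_impl, satR_disj, satR_bigConj, satR_bigDisj, List.forall_mem_map]
  simp only [List.mem_map, exists_exists_and_eq_and]
  refine imp_congr (forall₂_congr fun θ hθ => ?_) (or_congr (satR_congr_of_isProp hphi)
    (exists_congr fun ψ => and_congr_right fun hψ => ?_))
  · exact satR_typ_congr hlt (hths θ hθ)
  · exact satR_typ_congr hlt (hpss ψ hψ)

end Satisfaction

section RankDownClosed

variable {α β : Type*} [Preorder β]

def IsRankDownClosed (ρ : α → β) (S : Set α) : Prop :=
  ∀ ⦃u v⦄, v ∈ S → ρ u < ρ v → u ∈ S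

lemma IsRankDownClosed.of_eq_top_rank {ρ : α → β} {S : Set α} {n : β} (hle : ∀ v, ρ v ≤ n)
    (hout : ∀ v ∉ S, ρ v = n) : IsRankDownClosed ρ S := fun u v _ huv => by
  by_contra hu
  exact (huv.trans_le (hle v)).ne (hout u hu)

lemma IsRankDownClosed.lt_iff_lt {ρ ρ' : α → β} {S : Set α} (hS : IsRankDownClosed ρ S)
    (hle : ρ ≤ ρ') (heq : Set.EqOn ρ' ρ S) {v : α} (hv : v ∈ S) (u : α) :
    ρ u < ρ v ↔ ρ' u < ρ' v := by
  rw [heq hv]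
  exact ⟨fun h => heq (hS hv h) ▸ h, (hle u).trans_lt⟩

end RankDownClosed

section Construction

variable {P : Type u} {K : Set (PTL P)} {ρ ρ' : Val P → ℕ∞} {S : Set (Val P)}

lemma le_bump : ρ ≤ bump ρ S := fun v => by
  unfold bump
  split_ifs
  exacts [le_rfl, le_self_add]

lemma eqOn_bump : Set.EqOn (bump ρ S) ρ S := fun _ hv => if_pos hv

lemma le_toInf : ρ ≤ toInf ρ S := fun v => by
  unfold toInf
  split_ifs
  exacts [le_rfl, le_top]

lemma eqOn_toInf : Set.EqOn (toInf ρ S) ρ S := fun _ hv => if_pos hv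

lemma mem_of_toInf_lt_top {v : Val P} (hv : toInf ρ S v < ⊤) : v ∈ S := by
  by_contra h
  rw [toInf, if_neg h] at hv
  exact hv.ne rfl

lemma mem_KExt_of_lt_iff (hK : ∀ a ∈ K, InNormalForm a) {v : Val P} (hv : v ∈ KExt K ρ)
    (hfin : ρ' v < ⊤) (hlt : ∀ u, ρ u < ρ v ↔ ρ' u < ρ' v) : v ∈ KExt K ρ' :=
  ⟨hfin, fun a ha => (satR_congr_of_inNormalForm hlt (hK a ha)).1 (hv.2 a ha)⟩

lemma modelsR_toInf_KExt (hK : ∀ a ∈ K, InNormalForm a) (hS : IsRankDownClosed ρ (KExt K ρ)) :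
    ∀ a ∈ K, modelsR (toInf ρ (KExt K ρ)) a := fun a ha _ hv =>
  have hvS := mem_of_toInf_lt_top hv
  (mem_KExt_of_lt_iff hK hvS hv (hS.lt_iff_lt le_toInf eqOn_toInf hvS)).2 a ha

lemma Rseq_le (K : Set (PTL P)) : ∀ (i : ℕ) (v : Val P), Rseq K i v ≤ i
  | 0, _ => le_rfl
  | i + 1, v => by
    unfold Rseq bump
    split_ifs
    · exact (Rseq_le K i v).trans (by norm_cast; omega)
    · exact_mod_cast add_le_add_left (Rseq_le K i v) 1

lemma Rseq_lt_top (K : Set (PTL P)) (i : ℕ) (v : Val P) : Rseq K i v < ⊤ :=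
  (Rseq_le K i v).trans_lt (ENat.natCast_lt_top i)

lemma KExt_Rseq_subset_succ (hK : ∀ a ∈ K, InNormalForm a) {i : ℕ}
    (hS : IsRankDownClosed (Rseq K i) (KExt K (Rseq K i))) :
    KExt K (Rseq K i) ⊆ KExt K (Rseq K (i + 1)) := fun _ hv =>
  mem_KExt_of_lt_iff hK hv (Rseq_lt_top K _ _) (hS.lt_iff_lt le_bump eqOn_bump hv)

lemma Rseq_eq_of_notMem_KExt (hK : ∀ a ∈ K, InNormalForm a) :
    ∀ (i : ℕ) (v : Val P), v ∉ KExt K (Rseq K i) → Rseq K i v = i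
  | 0, _, _ => rfl
  | i + 1, v, hv => by
    have hS := IsRankDownClosed.of_eq_top_rank (Rseq_le K i) (Rseq_eq_of_notMem_KExt hK i)
    have hvi : v ∉ KExt K (Rseq K i) := fun h => hv (KExt_Rseq_subset_succ hK hS h)
    rw [Rseq, bump, if_neg hvi, Rseq_eq_of_notMem_KExt hK i v hvi]
    norm_cast

lemma isRankDownClosed_KExt_Rseq (hK : ∀ a ∈ K, InNormalForm a) (i : ℕ) :
    IsRankDownClosed (Rseq K i) (KExt K (Rseq K i)) :=
  .of_eq_top_rank (Rseq_le K i) (Rseq_eq_of_notMem_KExt hK i)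

end Construction

theorem ptl_Rstar_is_model_general {P : Type u}
    (K : Set (PTL P)) (hK : ∀ a ∈ K, InNormalForm a) :
    ∀ a ∈ K, modelsR (Rstar K) a := by
  unfold Rstar
  cases stopIdx K with
  -- `stopIdx K = 0` only as the junk value `sInf ∅ = 0`, and then `R*_K` is constantly `⊤`.
  | zero =>
    intro a _ v hv
    exact absurd (mem_of_toInf_lt_top hv) (Set.notMem_empty v)
  | succ k => exact modelsR_toInf_KExt hK (isRankDownClosed_KExt_Rseq hK k)

/-- `R*_K` is a ranked model of `K`. -/
theorem ptl_Rstar_is_model {P : Type u} [Fintype P] [DecidableEq P]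
    (K : Set (PTL P)) (hK : ∀ a ∈ K, InNormalForm a) :
    ∀ a ∈ K, modelsR (Rstar K) a :=
  ptl_Rstar_is_model_general K hK
end

section
/- (i) For every K ⊆ L• and every α ∈ L•: if K |≈_PT α, then K |≈_PT' α. (ii) The converse fails: for P = {f, p, r} consisting of three distinct atoms and K' = {•⊤ → (¬p ∧ ¬r), •p → ¬f, •r → •f, p → ¬r}, we have K' |≈_PT' •⊤ → ¬f but not K' |≈_PT •⊤ → ¬f. -/
attribute [local instance] Classical.propDecidable

universe u

/-- The PT preference `⪯_PT` on ranking functions: pointwise comparison. -/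
def PTle {P : Type u} (rho1 rho2 : Val P → ℕ∞) : Prop :=
  ∀ w, rho1 w ≤ rho2 w

/-- Strict PT preference. -/
def PTlt {P : Type u} (rho1 rho2 : Val P → ℕ∞) : Prop :=
  PTle rho1 rho2 ∧ ¬ PTle rho2 rho1

/-- `Mod(K)`: the set of ranked models of `K`. -/
def ModSet {P : Type u} (K : Set (PTL P)) : Set (RankedInterp P) :=
  {R | modelsSet R K}

/-- The PT-minimal ranked models of `K`. -/
def minPT {P : Type u} (K : Set (PTL P)) : Set (RankedInterp P) :=
  {R ∈ ModSet K | ¬ ∃ R' ∈ ModSet K, PTlt R'.rk R.rk}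

/-- PT-entailment consequences of `K`. -/
def CnPT {P : Type u} (K : Set (PTL P)) : Set (PTL P) :=
  {a | ∀ R ∈ minPT K, R.models a}

/-- The atom `f` ("flies"). -/
def fA : PTL (Fin 3) := PTL.atom 0
/-- The atom `p` ("penguin"). -/
def pA : PTL (Fin 3) := PTL.atom 1
/-- The atom `r` ("robin"). -/
def rA : PTL (Fin 3) := PTL.atom 2

/-- The set of possible valuations of a ranked interpretation. -/
def possSet {P : Type u} (R : RankedInterp P) : Set (Val P) :=
  {v | R.rk v < ⊤}

/-- The PT-minimal models of `K` with `⊆`-maximal sets of possible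
valuations. -/
def minPT' {P : Type u} (K : Set (PTL P)) : Set (RankedInterp P) :=
  {R ∈ minPT K | ¬ ∃ R' ∈ minPT K, possSet R ⊂ possSet R'}

/-- PT-entailment. -/
def PTentails {P : Type u} (K : Set (PTL P)) (a : PTL P) : Prop :=
  ∀ R ∈ minPT K, R.models a

/-- PT'-entailment. -/
def PTentails' {P : Type u} (K : Set (PTL P)) (a : PTL P) : Prop :=
  ∀ R ∈ minPT' K, R.models a

/-- The knowledge base `{•⊤ → (¬p ∧ ¬r), •p → ¬f, •r → •f, p → ¬r}`. -/
def Keg' : Set (PTL (Fin 3)) :=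
  {PTL.impl (PTL.typ PTL.top) (PTL.conj (PTL.neg pA) (PTL.neg rA)),
   PTL.impl (PTL.typ pA) (PTL.neg fA),
   PTL.impl (PTL.typ rA) (PTL.typ fA),
   PTL.impl pA (PTL.neg rA)}

/-!
Every PT'-minimal model is PT-minimal, which gives (i). For `K'`, the PT-minimal model `R₁` puts
the flying world `f¬p¬r` at rank 0, so `•⊤ → ¬f` is not PT-entailed. But whenever `f¬p¬r` has
rank 0 in a model of `K'`, the world `f¬pr` is impossible: `•r → •f` would push it down to rank 0,
where `•⊤ → ¬p ∧ ¬r` excludes `r`. The PT-minimal model `R₂` admits every world except the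
`p ∧ r` ones, which no model of `K'` admits, so a model with a flying typical world does not have
a maximal set of possible worlds.
-/

-- Otherwise `Classical.propDecidable` shadows the computable instances that `decide` relies on.
attribute [-instance] Classical.propDecidable

instance satR.decidable {P : Type u} [Fintype P] [DecidableEq P] (rho : Val P → ℕ∞) :
    (a : PTL P) → (v : Val P) → Decidable (satR rho v a)
  | PTL.atom p, v => inferInstanceAs (Decidable (v p = true))
  | PTL.neg a, v => have := satR.decidable rho a v; inferInstanceAs (Decidable ¬_)
  | PTL.conj a b, v =>
    have := satR.decidable rho a v
    have := satR.decidable rho b v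
    inferInstanceAs (Decidable (_ ∧ _))
  | PTL.top, _ => isTrue trivial
  | PTL.bot, _ => isFalse id
  | PTL.typ a, _ =>
    have := fun w => satR.decidable rho a w
    inferInstanceAs (Decidable (_ ∧ ∀ _, _ → ¬_))

instance modelsR.decidable {P : Type u} [Fintype P] [DecidableEq P] (rho : Val P → ℕ∞)
    (a : PTL P) : Decidable (modelsR rho a) :=
  inferInstanceAs (Decidable (∀ _, _ → _))

section Semantics

variable {P : Type u} {rho : Val P → ℕ∞} {v : Val P} {a b : PTL P}

theorem satR_impl_s17 : satR rho v (PTL.impl a b) ↔ (satR rho v a → satR rho v b) := by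
  simp only [PTL.impl, satR, not_and, not_not]

theorem satR_typ_iff_forall_le :
    satR rho v (PTL.typ a) ↔ satR rho v a ∧ ∀ w, satR rho w a → rho v ≤ rho w := by
  simp only [satR, not_lt, imp_not_comm]

theorem satR_typ_top_iff (hconv : RkConvex rho) (hv : rho v ≠ ⊤) :
    satR rho v (PTL.typ PTL.top) ↔ rho v = 0 := by
  rw [satR_typ_iff_forall_le]
  simp only [satR, true_implies, true_and]
  refine ⟨fun hmin => ?_, fun h0 w => h0 ▸ zero_le⟩
  obtain ⟨n, hn⟩ := WithTop.ne_top_iff_exists.1 hv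
  rcases Nat.eq_zero_or_pos n with rfl | hpos
  · exact hn.symm
  · obtain ⟨w, hw⟩ := hconv v n hn.symm 0 hpos
    exact absurd (hmin w) (by rw [hw, ← hn]; exact not_le.2 (Nat.cast_pos.2 hpos))

theorem RkConvex.of_exists_add_one_eq
    (h : ∀ v, rho v ≠ 0 → rho v ≠ ⊤ → ∃ w, rho w + 1 = rho v) : RkConvex rho := by
  intro v i hv j hj
  induction i generalizing v with
  | zero => omega
  | succ i ih =>
    obtain ⟨w, hw⟩ := h v (by simp [hv]) (by simp [hv])
    have hwi : rho w = i := by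
      rw [hv, Nat.cast_succ] at hw
      exact WithTop.add_right_cancel ENat.one_ne_top hw
    rcases Nat.lt_succ_iff_lt_or_eq.1 hj with hj | rfl
    · exact ih w hwi hj
    · exact ⟨w, hwi⟩

end Semantics

theorem mem_minPT_of_forall_PTle {P : Type u} {K : Set (PTL P)} {R : RankedInterp P}
    (hR : R ∈ ModSet K) (h : ∀ R' ∈ ModSet K, PTle R'.rk R.rk → PTle R.rk R'.rk) :
    R ∈ minPT K :=
  ⟨hR, fun ⟨R', hR', hle, hnle⟩ => hnle (h R' hR' hle)⟩

theorem PTentails.PTentails' {P : Type u} {K : Set (PTL P)} {a : PTL P}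
    (h : PTentails K a) : PTentails' K a :=
  fun R hR => h R hR.1

theorem ENat.two_le_of_one_le_of_lt {a b : ℕ∞} (ha : 1 ≤ a) (hab : a < b) : 2 ≤ b :=
  calc (2 : ℕ∞) = 1 + 1 := one_add_one_eq_two.symm
    _ ≤ a + 1 := add_le_add_left ha 1
    _ ≤ b := Order.add_one_le_of_lt hab

-- A world is written `![f, p, r]`; lemma names refer to it by its true atoms.
namespace Keg'

theorem modelsSet_iff {R : RankedInterp (Fin 3)} :
    modelsSet R Keg' ↔
      modelsR R.rk (PTL.impl (PTL.typ PTL.top) (PTL.conj (PTL.neg pA) (PTL.neg rA))) ∧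
      modelsR R.rk (PTL.impl (PTL.typ pA) (PTL.neg fA)) ∧
      modelsR R.rk (PTL.impl (PTL.typ rA) (PTL.typ fA)) ∧
      modelsR R.rk (PTL.impl pA (PTL.neg rA)) := by
  simp only [modelsSet, Keg', Set.mem_insert_iff, Set.mem_singleton_iff, forall_eq_or_imp,
    forall_eq, RankedInterp.models]

section RankedModel

variable {R : RankedInterp (Fin 3)}

theorem rk_ne_zero (hm : modelsSet R Keg') {v : Val (Fin 3)} (hv : v 1 = true ∨ v 2 = true) :
    R.rk v ≠ 0 := by
  intro h0
  have hnormal := satR_impl_s17.1 ((modelsSet_iff.1 hm).1 v (by simp [h0]))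
    (satR_typ_iff_forall_le.2 ⟨trivial, fun w _ => h0 ▸ zero_le⟩)
  simp only [satR, pA, rA] at hnormal
  tauto

theorem rk_eq_top (hm : modelsSet R Keg') {v : Val (Fin 3)} (hp : v 1 = true) (hr : v 2 = true) :
    R.rk v = ⊤ := by
  by_contra hv
  exact satR_impl_s17.1 ((modelsSet_iff.1 hm).2.2.2 v (lt_top_iff_ne_top.2 hv)) hp hr

theorem rk_fr_lt_rk_r (hm : modelsSet R Keg') (h : R.rk ![false, false, true] ≠ ⊤) :
    R.rk ![true, false, true] < R.rk ![false, false, true] := by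
  by_contra hle
  rw [not_lt] at hle
  have hr : satR R.rk ![false, false, true] (PTL.typ rA) := by
    refine satR_typ_iff_forall_le.2 ⟨rfl, (FinVec.forall_iff _).1 ?_⟩
    rintro (_ | _) (_ | _) (_ | _) (hr : _ = true) <;> first
      | exact absurd hr Bool.false_ne_true
      | exact le_rfl
      | exact hle
      | exact le_top.trans_eq (rk_eq_top hm rfl rfl).symm
  exact absurd (satR_impl_s17.1 ((modelsSet_iff.1 hm).2.2.1 _ (lt_top_iff_ne_top.2 h)) hr).1
    Bool.false_ne_true

theorem rk_fr_le_rk_r (hm : modelsSet R Keg') :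
    R.rk ![true, false, true] ≤ R.rk ![false, false, true] := by
  rcases eq_or_ne (R.rk ![false, false, true]) ⊤ with h | h
  · exact h ▸ le_top
  · exact (rk_fr_lt_rk_r hm h).le

theorem rk_fr_eq_top (hm : modelsSet R Keg') (h : R.rk ![true, false, false] = 0) :
    R.rk ![true, false, true] = ⊤ := by
  by_contra hfr
  have hr : satR R.rk ![true, false, true] (PTL.typ rA) := by
    refine satR_typ_iff_forall_le.2 ⟨rfl, (FinVec.forall_iff _).1 ?_⟩
    rintro (_ | _) (_ | _) (_ | _) (hr : _ = true) <;> first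
      | exact absurd hr Bool.false_ne_true
      | exact le_rfl
      | exact rk_fr_le_rk_r hm
      | exact le_top.trans_eq (rk_eq_top hm rfl rfl).symm
  have hf := satR_typ_iff_forall_le.1 (satR_impl_s17.1 ((modelsSet_iff.1 hm).2.2.1 _
    (lt_top_iff_ne_top.2 hfr)) hr)
  exact rk_ne_zero hm (Or.inr rfl) (le_antisymm (h ▸ hf.2 ![true, false, false] rfl) zero_le)

theorem rk_p_lt_rk_fp (hm : modelsSet R Keg') (h : R.rk ![true, true, false] ≠ ⊤) :
    R.rk ![false, true, false] < R.rk ![true, true, false] := by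
  by_contra hle
  rw [not_lt] at hle
  have hp : satR R.rk ![true, true, false] (PTL.typ pA) := by
    refine satR_typ_iff_forall_le.2 ⟨rfl, (FinVec.forall_iff _).1 ?_⟩
    rintro (_ | _) (_ | _) (_ | _) (hp : _ = true) <;> first
      | exact absurd hp Bool.false_ne_true
      | exact le_rfl
      | exact hle
      | exact le_top.trans_eq (rk_eq_top hm rfl rfl).symm
  exact satR_impl_s17.1 ((modelsSet_iff.1 hm).2.1 _ (lt_top_iff_ne_top.2 h)) hp rfl

end RankedModel

def rk₁ (v : Val (Fin 3)) : ℕ∞ :=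
  match v 0, v 1, v 2 with
  | false, false, false => 0
  | true, false, false => 0
  | false, true, false => 1
  | true, true, false => 2
  | _, _, true => ⊤

def rk₂ (v : Val (Fin 3)) : ℕ∞ :=
  match v 0, v 1, v 2 with
  | false, false, false => 0
  | true, false, false => 1
  | false, true, false => 1
  | true, false, true => 1
  | true, true, false => 2
  | false, false, true => 2
  | _, true, true => ⊤

def R₁ : RankedInterp (Fin 3) := ⟨rk₁, RkConvex.of_exists_add_one_eq (by decide)⟩

def R₂ : RankedInterp (Fin 3) := ⟨rk₂, RkConvex.of_exists_add_one_eq (by decide)⟩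

theorem R₁_mem_ModSet : R₁ ∈ ModSet Keg' := modelsSet_iff.2 (by decide)

theorem R₂_mem_ModSet : R₂ ∈ ModSet Keg' := modelsSet_iff.2 (by decide)

theorem rk₂_ne_top {v : Val (Fin 3)} (hv : ¬(v 1 = true ∧ v 2 = true)) : rk₂ v ≠ ⊤ := by
  revert v
  decide

theorem R₁_mem_minPT : R₁ ∈ minPT Keg' := by
  refine mem_minPT_of_forall_PTle R₁_mem_ModSet fun R hm hle => ?_
  have hfr := rk_fr_eq_top hm (nonpos_iff_eq_zero.1 (hle ![true, false, false]))
  have hr : R.rk ![false, false, true] = ⊤ := top_le_iff.1 (hfr ▸ rk_fr_le_rk_r hm)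
  have hp : 1 ≤ R.rk ![false, true, false] :=
    Order.one_le_iff_ne_zero.2 (rk_ne_zero hm (Or.inl rfl))
  have hfp : 2 ≤ R.rk ![true, true, false] := by
    rcases eq_or_ne (R.rk ![true, true, false]) ⊤ with h | h
    · exact h ▸ le_top
    · exact ENat.two_le_of_one_le_of_lt hp (rk_p_lt_rk_fp hm h)
  refine (FinVec.forall_iff _).1 ?_
  rintro (_ | _) (_ | _) (_ | _)
  · exact zero_le
  · exact hr.ge
  · exact hp
  · exact (rk_eq_top hm rfl rfl).ge
  · exact zero_le
  · exact hfr.ge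
  · exact hfp
  · exact (rk_eq_top hm rfl rfl).ge

theorem R₂_mem_minPT : R₂ ∈ minPT Keg' := by
  refine mem_minPT_of_forall_PTle R₂_mem_ModSet fun R hm hle => ?_
  have hfr : 1 ≤ R.rk ![true, false, true] :=
    Order.one_le_iff_ne_zero.2 (rk_ne_zero hm (Or.inr rfl))
  have hp : 1 ≤ R.rk ![false, true, false] :=
    Order.one_le_iff_ne_zero.2 (rk_ne_zero hm (Or.inl rfl))
  have hf : 1 ≤ R.rk ![true, false, false] := Order.one_le_iff_ne_zero.2 fun h =>
    ne_top_of_le_ne_top ENat.one_ne_top (hle ![true, false, true]) (rk_fr_eq_top hm h)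
  have hfp : 2 ≤ R.rk ![true, true, false] := ENat.two_le_of_one_le_of_lt hp
    (rk_p_lt_rk_fp hm (ne_top_of_le_ne_top (by decide) (hle ![true, true, false])))
  have hr : 2 ≤ R.rk ![false, false, true] := ENat.two_le_of_one_le_of_lt hfr
    (rk_fr_lt_rk_r hm (ne_top_of_le_ne_top (by decide) (hle ![false, false, true])))
  refine (FinVec.forall_iff _).1 ?_
  rintro (_ | _) (_ | _) (_ | _)
  · exact zero_le
  · exact hr
  · exact hp
  · exact (rk_eq_top hm rfl rfl).ge
  · exact hf
  · exact hfr
  · exact hfp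
  · exact (rk_eq_top hm rfl rfl).ge

theorem possSet_subset_possSet_R₂ {R : RankedInterp (Fin 3)} (hm : modelsSet R Keg') :
    possSet R ⊆ possSet R₂ := fun _ hv =>
  lt_top_iff_ne_top.2 (rk₂_ne_top fun ⟨hp, hr⟩ => hv.ne (rk_eq_top hm hp hr))

theorem PTentails'_typ_top_impl_neg_fA :
    PTentails' Keg' (PTL.impl (PTL.typ PTL.top) (PTL.neg fA)) := by
  rintro R ⟨hmin, hmax⟩ v hv
  refine satR_impl_s17.2 fun htyp hf => hmax ⟨R₂, R₂_mem_minPT, possSet_subset_possSet_R₂ hmin.1, ?_⟩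
  have h0 : R.rk v = 0 := (satR_typ_top_iff R.convex hv.ne).1 htyp
  have hnormal : ¬(v 1 = true ∨ v 2 = true) := fun h => rk_ne_zero hmin.1 h h0
  have hv_eq : v = ![true, false, false] := by
    funext i
    fin_cases i <;> simp_all [satR, fA]
  have hfr := rk_fr_eq_top hmin.1 (hv_eq ▸ h0)
  exact fun hsub => (hsub (show R₂.rk ![true, false, true] < ⊤ by decide)).ne hfr

theorem not_PTentails_typ_top_impl_neg_fA :
    ¬PTentails Keg' (PTL.impl (PTL.typ PTL.top) (PTL.neg fA)) := fun h =>
  absurd (h R₁ R₁_mem_minPT) (by decide : ¬modelsR rk₁ _)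

end Keg'

/-- PT'-entailment extends PT-entailment, and the extension is
strict: for the example knowledge base, `•⊤ → ¬f` is PT'-entailed but not
PT-entailed. -/
theorem ptl_PT'_stronger_than_PT :
    (∀ (P : Type) [Fintype P] [DecidableEq P]
        (K : Set (PTL P)) (a : PTL P), PTentails K a → PTentails' K a) ∧
    PTentails' Keg' (PTL.impl (PTL.typ PTL.top) (PTL.neg fA)) ∧
    ¬ PTentails Keg' (PTL.impl (PTL.typ PTL.top) (PTL.neg fA)) :=
  ⟨fun _ _ _ _ _ h => h.PTentails', Keg'.PTentails'_typ_top_impl_neg_fA,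
    Keg'.not_PTentails_typ_top_impl_neg_fA⟩
end
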